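/- arXiv:2509.00355 — 7 statements merged into one kernel-verified Lean document; each statement's English description precedes it below -/
import Mathlib

section
/- Let φ be an (anti)morphic involution induced by an involutive letter map t : Σ → Σ, and let u, v, w ∈ Σ+. If {u, φ(u)}·{w, φ(w)} = {w, φ(w)}·{u, φ(u)} (equality of the two product sets of words), then (u ⇄φ v) ⇄φ w = u ⇄φ (v ⇄φ w). -/
/-- The strong φ-bi-catenation of two words. -/
def biCat {α : Type*} (φ : List α → List α) (u v : List α) : Set (List α) :=
  {u ++ v, u ++ φ v, φ u ++ v, φ u ++ φ v, v ++ u, v ++ φ u, φ v ++ u, φ v ++ φ u}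

/-- `φ` is the morphic or the antimorphic involution induced by the involutive
letter map `t`. -/
def IsAminv {α : Type*} (t : α → α) (φ : List α → List α) : Prop :=
  (∀ a, t (t a) = a) ∧
    ((∀ u : List α, φ u = u.map t) ∨ (∀ u : List α, φ u = (u.map t).reverse))

/-- Concatenation product of two languages. -/
def setProd {α : Type*} (A B : Set (List α)) : Set (List α) :=
  Set.image2 (· ++ ·) A B

/-- Strong φ-bi-catenation of a language with a word. -/
def biCatSW {α : Type*} (φ : List α → List α) (A : Set (List α)) (w : List α) :
    Set (List α) := ⋃ x ∈ A, biCat φ x w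

/-- Strong φ-bi-catenation of a word with a language. -/
def biCatWS {α : Type*} (φ : List α → List α) (w : List α) (A : Set (List α)) :
    Set (List α) := ⋃ x ∈ A, biCat φ w x

section Aux
variable {α : Type*} {t : α → α} {φ : List α → List α}

lemma aminv_invol (hφ : IsAminv t φ) : ∀ x, φ (φ x) = x := by
  obtain ⟨ht, h | h⟩ := hφ <;> intro x <;>
    simp [h, List.map_map, Function.comp_def, ht]

lemma aminv_append (hφ : IsAminv t φ) :
    (∀ a b : List α, φ (a ++ b) = φ a ++ φ b) ∨
      (∀ a b : List α, φ (a ++ b) = φ b ++ φ a) := by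
  obtain ⟨ht, h | h⟩ := hφ
  · left; intro a b; simp [h]
  · right; intro a b; simp [h]

lemma biCat_eq (x y : List α) :
    biCat φ x y =
      setProd {x, φ x} {y, φ y} ∪ setProd {y, φ y} {x, φ x} := by
  ext z
  simp only [biCat, setProd, Set.mem_union, Set.mem_image2, Set.mem_insert_iff,
    Set.mem_singleton_iff]
  constructor
  · rintro (rfl | rfl | rfl | rfl | rfl | rfl | rfl | rfl) <;> aesop
  · rintro (⟨a, (rfl | rfl), b, (rfl | rfl), rfl⟩ | ⟨a, (rfl | rfl), b, (rfl | rfl), rfl⟩) <;> tauto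

lemma biCat_phi_closed (hφ : IsAminv t φ) (x y : List α) :
    ∀ z ∈ biCat φ x y, φ z ∈ biCat φ x y := by
  have hi := aminv_invol hφ
  rcases aminv_append hφ with h | h <;>
  · intro z hz
    simp only [biCat, Set.mem_insert_iff, Set.mem_singleton_iff] at hz ⊢
    rcases hz with rfl | rfl | rfl | rfl | rfl | rfl | rfl | rfl <;>
      simp [h, hi] <;> tauto

lemma biCatSW_eq (hφ : IsAminv t φ) (A : Set (List α))
    (hA : ∀ z ∈ A, φ z ∈ A) (w : List α) :
    biCatSW φ A w = setProd A {w, φ w} ∪ setProd {w, φ w} A := by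
  ext z
  simp only [biCatSW, Set.mem_iUnion, Set.mem_union]
  constructor
  · rintro ⟨x, hx, hz⟩
    rw [biCat_eq] at hz
    simp only [setProd, Set.mem_union, Set.mem_image2, Set.mem_insert_iff,
      Set.mem_singleton_iff] at hz ⊢
    rcases hz with ⟨a, ha, b, hb, rfl⟩ | ⟨a, ha, b, hb, rfl⟩
    · rcases ha with rfl | rfl
      · exact Or.inl ⟨a, hx, b, hb, rfl⟩
      · exact Or.inl ⟨_, hA x hx, b, hb, rfl⟩
    · rcases hb with rfl | rfl
      · exact Or.inr ⟨a, ha, b, hx, rfl⟩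
      · exact Or.inr ⟨a, ha, _, hA x hx, rfl⟩
  · simp only [setProd, Set.mem_union, Set.mem_image2, Set.mem_insert_iff,
      Set.mem_singleton_iff]
    rintro (⟨a, ha, b, hb, rfl⟩ | ⟨a, ha, b, hb, rfl⟩)
    · exact ⟨a, ha, by rcases hb with rfl | rfl <;> simp [biCat]⟩
    · exact ⟨b, hb, by rcases ha with rfl | rfl <;> simp [biCat]⟩

lemma biCatWS_eq (hφ : IsAminv t φ) (A : Set (List α))
    (hA : ∀ z ∈ A, φ z ∈ A) (u : List α) :
    biCatWS φ u A = setProd {u, φ u} A ∪ setProd A {u, φ u} := by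
  ext z
  simp only [biCatWS, Set.mem_iUnion, Set.mem_union]
  constructor
  · rintro ⟨x, hx, hz⟩
    rw [biCat_eq] at hz
    simp only [setProd, Set.mem_union, Set.mem_image2, Set.mem_insert_iff,
      Set.mem_singleton_iff] at hz ⊢
    rcases hz with ⟨a, ha, b, hb, rfl⟩ | ⟨a, ha, b, hb, rfl⟩
    · rcases hb with rfl | rfl
      · exact Or.inl ⟨a, ha, b, hx, rfl⟩
      · exact Or.inl ⟨a, ha, _, hA x hx, rfl⟩
    · rcases ha with rfl | rfl
      · exact Or.inr ⟨a, hx, b, hb, rfl⟩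
      · exact Or.inr ⟨_, hA x hx, b, hb, rfl⟩
  · simp only [setProd, Set.mem_union, Set.mem_image2, Set.mem_insert_iff,
      Set.mem_singleton_iff]
    rintro (⟨a, ha, b, hb, rfl⟩ | ⟨a, ha, b, hb, rfl⟩)
    · exact ⟨b, hb, by rcases ha with rfl | rfl <;> simp [biCat]⟩
    · exact ⟨a, ha, by rcases hb with rfl | rfl <;> simp [biCat]⟩

lemma setProd_assoc (A B C : Set (List α)) :
    setProd (setProd A B) C = setProd A (setProd B C) :=
  Set.image2_assoc fun _ _ _ => List.append_assoc _ _ _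

lemma setProd_union_left (A A' B : Set (List α)) :
    setProd (A ∪ A') B = setProd A B ∪ setProd A' B :=
  Set.image2_union_left

lemma setProd_union_right (A B B' : Set (List α)) :
    setProd A (B ∪ B') = setProd A B ∪ setProd A B' :=
  Set.image2_union_right

end Aux

/-- If `{u, φ u}·{w, φ w} = {w, φ w}·{u, φ u}` then
`(u ⇄φ v) ⇄φ w = u ⇄φ (v ⇄φ w)`. -/
theorem biCat_assoc_of_comm {α : Type*} (t : α → α) (φ : List α → List α)
    (hφ : IsAminv t φ) (u v w : List α) (hu : u ≠ []) (hv : v ≠ []) (hw : w ≠ [])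
    (h : setProd ({u, φ u} : Set (List α)) {w, φ w} =
        setProd ({w, φ w} : Set (List α)) {u, φ u}) :
    biCatSW φ (biCat φ u v) w = biCatWS φ u (biCat φ v w) := by
  rw [biCatSW_eq hφ _ (biCat_phi_closed hφ u v) w,
    biCatWS_eq hφ _ (biCat_phi_closed hφ v w) u,
    biCat_eq u v, biCat_eq v w,
    setProd_union_left, setProd_union_right,
    setProd_union_right, setProd_union_left]
  set U : Set (List α) := ({u, φ u} : Set (List α)) with hU
  set V : Set (List α) := ({v, φ v} : Set (List α)) with hV
  set W : Set (List α) := ({w, φ w} : Set (List α)) with hW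
  have e1 : setProd (setProd U V) W = setProd U (setProd V W) := setProd_assoc ..
  have e2 : setProd (setProd V U) W = setProd (setProd V W) U := by
    rw [setProd_assoc, h, ← setProd_assoc]
  have e3 : setProd W (setProd U V) = setProd U (setProd W V) := by
    rw [← setProd_assoc, ← h, setProd_assoc]
  have e4 : setProd W (setProd V U) = setProd (setProd W V) U := by
    rw [setProd_assoc]
  rw [e1, e2, e3, e4]
  ac_rfl
end

section
/- Let φ be an (anti)morphic involution induced by an involutive letter map t : Σ → Σ, and let L ⊆ Σ* be a nonempty language. For every n ≥ 1, the n-th ⇄φ-power of L is exactly the set of all concatenations of n words from L_φ: L^{⇄φ(n)} = {u₁u₂⋯uₙ : uᵢ ∈ L_φ for 1 ≤ i ≤ n} = (L_φ)ⁿ. -/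
/-- `L_φ = L ∪ φ(L)`. -/
def lphi {α : Type*} (φ : List α → List α) (L : Set (List α)) : Set (List α) :=
  L ∪ φ '' L

/-- Strong φ-bi-catenation of two languages. -/
def biCatLang {α : Type*} (φ : List α → List α) (A B : Set (List α)) :
    Set (List α) := ⋃ u ∈ A, ⋃ v ∈ B, biCat φ u v

/-- Iterated ⇄φ-powers of a language: `L^{⇄φ(1)} = L_φ`,
`L^{⇄φ(n+1)} = L^{⇄φ(n)} ⇄φ L`. -/
def biPow {α : Type*} (φ : List α → List α) (L : Set (List α)) : ℕ → Set (List α)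
  | 0 => {[]}
  | 1 => lphi φ L
  | n + 2 => biCatLang φ (biPow φ L (n + 1)) L

/-- Ordinary n-th power of a language. -/
def langPow {α : Type*} (A : Set (List α)) : ℕ → Set (List α)
  | 0 => {[]}
  | n + 1 => setProd A (langPow A n)

lemma phi_phi {α : Type*} {t : α → α} {φ : List α → List α} (hφ : IsAminv t φ)
    (u : List α) : φ (φ u) = u := by
  obtain ⟨ht, h | h⟩ := hφ
  · simp [h, List.map_map, Function.comp_def, ht]
  · simp [h, List.map_reverse, List.map_map, Function.comp_def, ht]

lemma lphi_phi_mem {α : Type*} {t : α → α} {φ : List α → List α} (hφ : IsAminv t φ)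
    {L : Set (List α)} {x : List α} (hx : x ∈ lphi φ L) : φ x ∈ lphi φ L := by
  rcases hx with hx | ⟨y, hy, rfl⟩
  · exact Or.inr ⟨x, hx, rfl⟩
  · rw [phi_phi hφ]; exact Or.inl hy

lemma mem_langPow_iff {α : Type*} (A : Set (List α)) (n : ℕ) (w : List α) :
    w ∈ langPow A n ↔ ∃ us : List (List α), us.length = n ∧
      (∀ x ∈ us, x ∈ A) ∧ w = us.flatten := by
  induction n generalizing w with
  | zero =>
    constructor
    · rintro rfl; exact ⟨[], rfl, by simp, rfl⟩
    · rintro ⟨us, h, _, rfl⟩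
      rw [List.length_eq_zero_iff] at h; subst h; rfl
  | succ n ih =>
    constructor
    · rintro ⟨a, ha, b, hb, rfl⟩
      obtain ⟨us, hlen, hmem, rfl⟩ := (ih b).1 hb
      refine ⟨a :: us, by simp [hlen], ?_, by simp⟩
      intro x hx
      rcases List.mem_cons.1 hx with rfl | hx
      · exact ha
      · exact hmem x hx
    · rintro ⟨us, hlen, hmem, rfl⟩
      cases us with
      | nil => simp at hlen
      | cons a us =>
        exact ⟨a, hmem a (by simp), us.flatten, (ih us.flatten).2
          ⟨us, by simpa using hlen, fun x hx => hmem x (List.mem_cons_of_mem _ hx), rfl⟩,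
          by simp⟩

lemma langPow_phi_mem {α : Type*} {t : α → α} {φ : List α → List α} (hφ : IsAminv t φ)
    {L : Set (List α)} {n : ℕ} {u : List α} (hu : u ∈ langPow (lphi φ L) n) :
    φ u ∈ langPow (lphi φ L) n := by
  obtain ⟨us, hlen, hmem, rfl⟩ := (mem_langPow_iff _ n u).1 hu
  obtain ⟨ht, h | h⟩ := hφ
  · refine (mem_langPow_iff _ n _).2 ⟨us.map φ, by simp [hlen], ?_, ?_⟩
    · intro x hx
      obtain ⟨y, hy, rfl⟩ := List.mem_map.1 hx
      exact lphi_phi_mem ⟨ht, Or.inl h⟩ (hmem y hy)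
    · rw [h us.flatten, List.map_flatten]
      congr 1
      exact (List.map_congr_left fun x _ => h x).symm
  · refine (mem_langPow_iff _ n _).2 ⟨(us.map φ).reverse, by simp [hlen], ?_, ?_⟩
    · intro x hx
      rw [List.mem_reverse] at hx
      obtain ⟨y, hy, rfl⟩ := List.mem_map.1 hx
      exact lphi_phi_mem ⟨ht, Or.inr h⟩ (hmem y hy)
    · rw [h us.flatten, List.map_flatten, List.reverse_flatten, List.map_map]
      have : us.map (List.reverse ∘ List.map t) = us.map φ :=
        (List.map_congr_left fun x _ => h x).symm
      rw [this]

lemma langPow_append_right {α : Type*} {A : Set (List α)} {n : ℕ} {a b : List α}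
    (ha : a ∈ langPow A n) (hb : b ∈ A) : a ++ b ∈ langPow A (n + 1) := by
  obtain ⟨us, hlen, hmem, rfl⟩ := (mem_langPow_iff _ n a).1 ha
  refine (mem_langPow_iff _ (n+1) _).2 ⟨us ++ [b], by simp [hlen], ?_, by simp⟩
  intro x hx
  rcases List.mem_append.1 hx with hx | hx
  · exact hmem x hx
  · simp at hx; subst hx; exact hb

lemma langPow_append_left {α : Type*} {A : Set (List α)} {n : ℕ} {a b : List α}
    (ha : a ∈ langPow A n) (hb : b ∈ A) : b ++ a ∈ langPow A (n + 1) :=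
  ⟨b, hb, a, ha, rfl⟩

lemma biPow_eq_langPow {α : Type*} (t : α → α) (φ : List α → List α) (hφ : IsAminv t φ)
    (L : Set (List α)) (n : ℕ) (hn : 1 ≤ n) :
    biPow φ L n = langPow (lphi φ L) n := by
  induction n, hn using Nat.le_induction with
  | base =>
    show lphi φ L = setProd (lphi φ L) {[]}
    ext w
    constructor
    · intro hw; exact ⟨w, hw, [], rfl, by simp⟩
    · rintro ⟨a, ha, b, rfl, rfl⟩; simpa using ha
  | succ n hn ih =>
    obtain ⟨m, rfl⟩ : ∃ m, n = m + 1 := ⟨n - 1, by omega⟩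
    show biCatLang φ (biPow φ L (m + 1)) L = _
    ext w
    constructor
    · intro hw
      simp only [biCatLang, Set.mem_iUnion] at hw
      obtain ⟨u, hu, v, hv, hw⟩ := hw
      rw [ih] at hu
      have hu' : φ u ∈ langPow (lphi φ L) (m + 1) := langPow_phi_mem hφ hu
      have hv1 : v ∈ lphi φ L := Or.inl hv
      have hv2 : φ v ∈ lphi φ L := lphi_phi_mem hφ hv1
      rcases hw with rfl | rfl | rfl | rfl | rfl | rfl | rfl | rfl
      · exact langPow_append_right hu hv1
      · exact langPow_append_right hu hv2
      · exact langPow_append_right hu' hv1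
      · exact langPow_append_right hu' hv2
      · exact langPow_append_left hu hv1
      · exact langPow_append_left hu' hv1
      · exact langPow_append_left hu hv2
      · exact langPow_append_left hu' hv2
    · intro hw
      obtain ⟨us, hlen, hmem, rfl⟩ := (mem_langPow_iff _ _ _).1 hw
      have hne : us ≠ [] := by rintro rfl; simp at hlen
      obtain rfl | ⟨us', b, rfl⟩ := us.eq_nil_or_concat
      · exact absurd rfl hne
      have hb : b ∈ lphi φ L := hmem b (by simp)
      have hus' : us'.flatten ∈ biPow φ L (m + 1) := by
        rw [ih]
        exact (mem_langPow_iff _ _ _).2 ⟨us', by simpa using hlen,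
          fun x hx => hmem x (by simp [hx]), rfl⟩
      simp only [biCatLang, Set.mem_iUnion]
      rcases hb with hb | ⟨c, hc, rfl⟩
      · exact ⟨us'.flatten, hus', b, hb, by simp [biCat]⟩
      · exact ⟨us'.flatten, hus', c, hc, by simp [biCat]⟩

/-- For `n ≥ 1`, `L^{⇄φ(n)}` is exactly the set of concatenations of `n` words
from `L_φ`, i.e. `(L_φ)ⁿ`. -/
theorem biPow_eq {α : Type*} (t : α → α) (φ : List α → List α) (hφ : IsAminv t φ)
    (L : Set (List α)) (hL : L.Nonempty) (n : ℕ) (hn : 1 ≤ n) :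
    biPow φ L n =
      {w : List α | ∃ us : List (List α), us.length = n ∧
        (∀ x ∈ us, x ∈ lphi φ L) ∧ w = us.flatten} ∧
    biPow φ L n = langPow (lphi φ L) n := by
  have h := biPow_eq_langPow t φ hφ L n hn
  refine ⟨?_, h⟩
  rw [h]
  ext w
  exact mem_langPow_iff _ n w
end

section
/- Let φ be an (anti)morphic involution induced by an involutive letter map t : Σ → Σ, and let L ⊆ Σ* be ⇄φ-closed. Then for every n ≥ 2 and every choice of languages L₁, …, Lₙ with each Lᵢ ∈ {L, φ(L)}, the product L₁L₂⋯Lₙ is contained in L. -/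
/-- The product `L₁L₂⋯Lₙ` of a list of languages. -/
def prodList {α : Type*} : List (Set (List α)) → Set (List α)
  | [] => {[]}
  | A :: As => setProd A (prodList As)

/-- A language is ⇄φ-closed if `u ⇄φ v ⊆ L` for all `u, v ∈ L`. -/
def BiCatClosed {α : Type*} (φ : List α → List α) (L : Set (List α)) : Prop :=
  ∀ u ∈ L, ∀ v ∈ L, biCat φ u v ⊆ L

/-!
A ⇄φ-closed language `L` absorbs every concatenation of two words taken from `L ∪ φ(L)`:
the concatenation is one of the eight words of `u ⇄φ v` for suitable `u, v ∈ L`. Hence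
`L ∪ φ(L)` is closed under concatenation, so every nonempty product of factors `L` or `φ(L)`
lies in `L ∪ φ(L)`, and splitting off the first factor of a product of length at least two
puts it inside `(L ∪ φ(L))(L ∪ φ(L)) ⊆ L`.
-/

theorem setProd_mono {α : Type*} {A A' B B' : Set (List α)} (hA : A ⊆ A') (hB : B ⊆ B') :
    setProd A B ⊆ setProd A' B' :=
  Set.image2_subset hA hB

@[simp]
theorem setProd_singleton_nil {α : Type*} (A : Set (List α)) : setProd A {[]} = A := by
  simp [setProd]

theorem prodList_subset_of_forall_subset {α : Type*} {S : Set (List α)}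
    (hS : setProd S S ⊆ S) :
    ∀ {Ls : List (Set (List α))}, Ls ≠ [] → (∀ A ∈ Ls, A ⊆ S) → prodList Ls ⊆ S
  | [A], _, h => by simpa [prodList] using h A List.mem_cons_self
  | A :: B :: Ls, _, h =>
    have hBLs : prodList (B :: Ls) ⊆ S :=
      prodList_subset_of_forall_subset hS (List.cons_ne_nil B Ls)
        fun A' hA' => h A' (List.mem_cons_of_mem A hA')
    (setProd_mono (h A List.mem_cons_self) hBLs).trans hS

theorem BiCatClosed.setProd_union_image_subset {α : Type*} {φ : List α → List α}
    {L : Set (List α)} (hL : BiCatClosed φ L) :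
    setProd (L ∪ φ '' L) (L ∪ φ '' L) ⊆ L := by
  rintro _ ⟨a, ha, b, hb, rfl⟩
  rcases ha with ha | ⟨u, hu, rfl⟩ <;> rcases hb with hb | ⟨v, hv, rfl⟩
  · exact hL a ha b hb (by simp [biCat])
  · exact hL a ha v hv (by simp [biCat])
  · exact hL u hu b hb (by simp [biCat])
  · exact hL u hu v hv (by simp [biCat])

theorem prod_subset_of_biCatClosed_general {α : Type*} (φ : List α → List α)
    (L : Set (List α)) (hL : BiCatClosed φ L)
    (n : ℕ) (hn : 2 ≤ n) (Ls : List (Set (List α))) (hlen : Ls.length = n)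
    (hmem : ∀ A ∈ Ls, A = L ∨ A = φ '' L) :
    prodList Ls ⊆ L := by
  set S := L ∪ φ '' L
  have hSS : setProd S S ⊆ L := hL.setProd_union_image_subset
  have hmem' : ∀ A ∈ Ls, A ⊆ S := by
    intro A hA
    rcases hmem A hA with rfl | rfl
    exacts [Set.subset_union_left, Set.subset_union_right]
  obtain ⟨A, B, Ls, rfl⟩ : ∃ A B Ls', Ls = A :: B :: Ls' := by
    match Ls, hlen, hn with
    | A :: B :: Ls', _, _ => exact ⟨A, B, Ls', rfl⟩
  have hBLs : prodList (B :: Ls) ⊆ S :=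
    prodList_subset_of_forall_subset (hSS.trans Set.subset_union_left)
      (List.cons_ne_nil B Ls) fun A' hA' => hmem' A' (List.mem_cons_of_mem A hA')
  exact (setProd_mono (hmem' A List.mem_cons_self) hBLs).trans hSS

/-- If `L` is ⇄φ-closed, then every product `L₁L₂⋯Lₙ` with `n ≥ 2` and each
`Lᵢ ∈ {L, φ(L)}` is contained in `L`. -/
theorem prod_subset_of_biCatClosed {α : Type*} (t : α → α) (φ : List α → List α)
    (hφ : IsAminv t φ) (L : Set (List α)) (hL : BiCatClosed φ L)
    (n : ℕ) (hn : 2 ≤ n) (Ls : List (Set (List α))) (hlen : Ls.length = n)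
    (hmem : ∀ A ∈ Ls, A = L ∨ A = φ '' L) :
    prodList Ls ⊆ L :=
  prod_subset_of_biCatClosed_general φ L hL n hn Ls hlen hmem
end

section
/- Let φ be an (anti)morphic involution induced by an involutive letter map t : Σ → Σ, and let L ⊆ Σ* be ⇄φ-closed. Then: (1) L is closed under catenation, i.e., u, v ∈ L implies uv ∈ L; (2) the reversal language L^R = {w.reverse : w ∈ L} is ⇄φ-closed; (3) φ(L) is ⇄φ-closed. -/
/-- If `L` is ⇄φ-closed then (1) `L` is closed under catenation,
(2) `L^R` is ⇄φ-closed, (3) `φ(L)` is ⇄φ-closed. -/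
theorem biCatClosed_props {α : Type*} (t : α → α) (φ : List α → List α)
    (hφ : IsAminv t φ) (L : Set (List α)) (hL : BiCatClosed φ L) :
    (∀ u ∈ L, ∀ v ∈ L, u ++ v ∈ L) ∧
    BiCatClosed φ {w : List α | ∃ x ∈ L, w = x.reverse} ∧
    BiCatClosed φ (φ '' L) := by
  obtain ⟨ht, hcase⟩ := hφ
  have htt : t ∘ t = id := funext ht
  have hφφ : ∀ u, φ (φ u) = u := by
    rcases hcase with h | h <;> intro u <;>
      simp [h, List.map_map, htt]
  have hrev : ∀ u : List α, φ u.reverse = (φ u).reverse := by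
    rcases hcase with h | h <;> intro u <;> simp [h]
  have happ : (∀ u v, φ (u ++ v) = φ u ++ φ v) ∨
      (∀ u v, φ (u ++ v) = φ v ++ φ u) := by
    rcases hcase with h | h
    · left; intro u v; simp [h]
    · right; intro u v; simp [h]
  refine ⟨?_, ?_, ?_⟩
  · intro u hu v hv
    exact hL u hu v hv (by simp [biCat])
  · rintro u ⟨x, hx, rfl⟩ v ⟨y, hy, rfl⟩ w hw
    simp only [biCat, Set.mem_insert_iff, Set.mem_singleton_iff] at hw
    rcases hw with rfl | rfl | rfl | rfl | rfl | rfl | rfl | rfl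
    · exact ⟨y ++ x, hL y hy x hx (by simp [biCat]), by simp⟩
    · exact ⟨φ y ++ x, hL y hy x hx (by simp [biCat]), by simp [hrev]⟩
    · exact ⟨y ++ φ x, hL y hy x hx (by simp [biCat]), by simp [hrev]⟩
    · exact ⟨φ y ++ φ x, hL y hy x hx (by simp [biCat]), by simp [hrev]⟩
    · exact ⟨x ++ y, hL x hx y hy (by simp [biCat]), by simp⟩
    · exact ⟨φ x ++ y, hL x hx y hy (by simp [biCat]), by simp [hrev]⟩
    · exact ⟨x ++ φ y, hL x hx y hy (by simp [biCat]), by simp [hrev]⟩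
    · exact ⟨φ x ++ φ y, hL x hx y hy (by simp [biCat]), by simp [hrev]⟩
  · rintro u ⟨x, hx, rfl⟩ v ⟨y, hy, rfl⟩ w hw
    simp only [biCat, Set.mem_insert_iff, Set.mem_singleton_iff] at hw
    refine ⟨φ w, ?_, hφφ w⟩
    rcases happ with h | h <;>
      rcases hw with rfl | rfl | rfl | rfl | rfl | rfl | rfl | rfl <;>
      · rw [h]; simp only [hφφ]
        exact hL x hx y hy (by simp [biCat])
end

section
/- Let θ be the antimorphic involution induced by an involutive letter map t : Σ → Σ, and let x, y ∈ Σ+. If x x θ(y) = θ(y) θ(x) x, then x and y are powers of a common θ-palindromic word, i.e., there exist p ∈ P_θ and integers i, j ≥ 1 with x = pⁱ and y = pʲ. -/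
/-- The n-th power of a word: `p` concatenated with itself `n` times. -/
def listPow {α : Type*} (p : List α) (n : ℕ) : List α := (List.replicate n p).flatten

namespace PalAux

variable {α : Type*}

theorem listPow_zero (p : List α) : listPow p 0 = [] := rfl

theorem listPow_succ (p : List α) (n : ℕ) : listPow p (n + 1) = p ++ listPow p n := by
  simp [listPow, List.replicate_succ]

theorem listPow_one (p : List α) : listPow p 1 = p := by
  simp [listPow]

theorem listPow_add (p : List α) (a b : ℕ) :
    listPow p (a + b) = listPow p a ++ listPow p b := by
  induction a with
  | zero => simp [listPow_zero]
  | succ n ih => rw [Nat.succ_add, listPow_succ, listPow_succ, ih, List.append_assoc]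

theorem listPow_succ' (p : List α) (n : ℕ) : listPow p (n + 1) = listPow p n ++ p := by
  rw [listPow_add, listPow_one]

/-- the antimorphic involution -/
def g (t : α → α) (u : List α) : List α := (u.map t).reverse

theorem g_append (t : α → α) (u v : List α) : g t (u ++ v) = g t v ++ g t u := by
  simp [g]

theorem length_g (t : α → α) (u : List α) : (g t u).length = u.length := by
  simp [g]

theorem g_g (t : α → α) (ht : ∀ a, t (t a) = a) (u : List α) : g t (g t u) = u := by
  simp only [g, List.map_reverse, List.reverse_reverse, List.map_map]
  induction u with
  | nil => rfl
  | cons a l ih => simp [ht, ih]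

theorem g_listPow (t : α → α) (p : List α) (n : ℕ) :
    g t (listPow p n) = listPow (g t p) n := by
  induction n with
  | zero => simp [listPow_zero, g]
  | succ n ih => rw [listPow_succ, g_append, ih, ← listPow_succ']

/-- commuting words have a common root -/
theorem comm_root (u v : List α) (h : u ++ v = v ++ u) :
    ∃ p k l, u = listPow p k ∧ v = listPow p l := by
  rcases eq_or_ne u [] with hu | hu
  · exact ⟨v, 0, 1, by simp [hu, listPow_zero], by simp [listPow_one]⟩
  rcases eq_or_ne v [] with hv | hv
  · exact ⟨u, 1, 0, by simp [listPow_one], by simp [hv, listPow_zero]⟩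
  rcases le_or_gt u.length v.length with hle | hlt
  · -- u is a prefix of v
    have hpre : u <+: v :=
      List.prefix_of_prefix_length_le ⟨v, h⟩ ⟨u, rfl⟩ hle
    obtain ⟨v', rfl⟩ := hpre
    have h' : u ++ v' = v' ++ u := by
      simp only [List.append_assoc] at h
      exact List.append_cancel_left h
    obtain ⟨p, k, l, hu', hv'⟩ := comm_root u v' h'
    exact ⟨p, k, k + l, hu', by rw [listPow_add, hu', hv']⟩
  · -- v is a prefix of u
    have hpre : v <+: u :=
      List.prefix_of_prefix_length_le ⟨u, h.symm⟩ ⟨v, rfl⟩ (le_of_lt hlt)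
    obtain ⟨u', rfl⟩ := hpre
    have h' : u' ++ v = v ++ u' := by
      simp only [List.append_assoc] at h
      exact List.append_cancel_left h
    obtain ⟨p, k, l, hu', hv'⟩ := comm_root u' v h'
    exact ⟨p, l + k, l, by rw [listPow_add, hu', hv'], hv'⟩
termination_by u.length + v.length
decreasing_by
  · have h2 : v.length = u.length + v'.length := by
      rw [← ‹u ++ v' = v›, List.length_append]
    have h1 : 0 < u.length := List.length_pos_iff.mpr hu
    omega
  · have h2 : u.length = v.length + u'.length := by
      rw [← ‹v ++ u' = u›, List.length_append]
    have h1 : 0 < v.length := List.length_pos_iff.mpr hv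
    omega

/-- main induction -/
theorem key (t : α → α) (ht : ∀ a, t (t a) = a) (z x : List α) (hx : x ≠ []) (hz : z ≠ [])
    (h : x ++ x ++ z = z ++ g t x ++ x) :
    ∃ p : List α, g t p = p ∧
      ∃ i j : ℕ, 1 ≤ i ∧ 1 ≤ j ∧ x = listPow p i ∧ z = listPow p j := by
  simp only [List.append_assoc] at h
  -- h : x ++ (x ++ z) = z ++ (g t x ++ x)
  rcases le_or_gt z.length x.length with hle | hlt
  · -- z is a prefix of x
    have hpre : z <+: x :=
      List.prefix_of_prefix_length_le ⟨g t x ++ x, h.symm⟩ ⟨x ++ z, rfl⟩ hle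
    obtain ⟨w, rfl⟩ := hpre
    rw [g_append] at h
    simp only [List.append_assoc] at h
    -- h : z ++ (w ++ (z ++ (w ++ z))) = z ++ (g t w ++ (g t z ++ (z ++ w)))
    have h1 := List.append_cancel_left h
    have h2 := List.append_inj h1 (length_g t w).symm
    obtain ⟨hw_pal, h3⟩ := h2
    -- h3 : z ++ (w ++ z) = g t z ++ (z ++ w)
    have h4 := List.append_inj h3 (length_g t z).symm
    obtain ⟨hz_pal, hcomm⟩ := h4
    -- hz_pal : z = g t z, hcomm : w ++ z = z ++ w
    obtain ⟨p, k, l, hw', hz'⟩ := comm_root w z hcomm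
    have hl : 1 ≤ l := by
      rcases Nat.eq_zero_or_pos l with h0 | h0
      · exact absurd (by rw [hz', h0, listPow_zero]) hz
      · exact h0
    have hp_pal : g t p = p := by
      obtain ⟨l', rfl⟩ : ∃ l', l = l' + 1 := ⟨l - 1, by omega⟩
      have heq : listPow p (l' + 1) = listPow (g t p) (l' + 1) := by
        rw [← hz', ← g_listPow, ← hz', ← hz_pal]
      rw [listPow_succ, listPow_succ] at heq
      exact ((List.append_inj heq (length_g t p).symm).1).symm
    refine ⟨p, hp_pal, l + k, l, by omega, hl, ?_, hz'⟩
    rw [listPow_add, ← hz', ← hw']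
  · -- x is a proper prefix of z
    have hpre : x <+: z :=
      List.prefix_of_prefix_length_le ⟨x ++ z, rfl⟩ ⟨g t x ++ x, h.symm⟩ (le_of_lt hlt)
    obtain ⟨z₁, rfl⟩ := hpre
    have hz₁ : z₁ ≠ [] := by
      intro h0
      rw [h0, List.append_nil] at hlt
      exact lt_irrefl _ hlt
    simp only [List.append_assoc] at h
    have h' : x ++ x ++ z₁ = z₁ ++ g t x ++ x := by
      simp only [List.append_assoc]
      exact List.append_cancel_left h
    obtain ⟨p, hp, i, j, hi, hj, hx', hz'⟩ := key t ht z₁ x hx hz₁ h'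
    exact ⟨p, hp, i, i + j, hi, by omega, hx', by rw [listPow_add, hx', hz']⟩
termination_by z.length
decreasing_by
  have h2 : z.length = x.length + z₁.length := by
    rw [← ‹x ++ z₁ = z›, List.length_append]
  have h1 : 0 < x.length := List.length_pos_iff.mpr hx
  omega

end PalAux

/-- If `x x θ(y) = θ(y) θ(x) x` then `x` and `y` are powers of a common
θ-palindromic word. -/
theorem powers_of_common_palindrome_of_eq {α : Type*} (t : α → α)
    (ht : ∀ a, t (t a) = a) (θ : List α → List α)
    (hθ : ∀ u : List α, θ u = (u.map t).reverse)
    (x y : List α) (hx : x ≠ []) (hy : y ≠ [])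
    (h : x ++ x ++ θ y = θ y ++ θ x ++ x) :
    ∃ p : List α, θ p = p ∧
      ∃ i j : ℕ, 1 ≤ i ∧ 1 ≤ j ∧ x = listPow p i ∧ y = listPow p j := by
  have hθg : ∀ u, θ u = PalAux.g t u := fun u => hθ u
  rw [hθg y, hθg x] at h
  have hzne : PalAux.g t y ≠ [] := by
    simp [PalAux.g, hy]
  obtain ⟨p, hp, i, j, hi, hj, hx', hz'⟩ := PalAux.key t ht (PalAux.g t y) x hx hzne h
  refine ⟨p, by rw [hθg]; exact hp, i, j, hi, hj, hx', ?_⟩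
  have hy' := congrArg (PalAux.g t) hz'
  rw [PalAux.g_g t ht, PalAux.g_listPow, hp] at hy'
  exact hy'
end

section
/- Let θ be the antimorphic involution induced by an involutive letter map t : Σ → Σ, and let x, y ∈ Σ+. If x x y = y x θ(x) or x x y = y θ(x) x, then x and y are powers of a common θ-palindromic word, i.e., there exist p ∈ P_θ and integers i, j ≥ 1 with x = pⁱ and y = pʲ. -/
section Aux
variable {α : Type*}

lemma listPow_zero (p : List α) : listPow p 0 = [] := rfl
lemma listPow_succ (p : List α) (n : ℕ) : listPow p (n+1) = p ++ listPow p n := rfl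
lemma listPow_one (p : List α) : listPow p 1 = p := by simp [listPow]
lemma listPow_add (p : List α) (m n : ℕ) :
    listPow p (m+n) = listPow p m ++ listPow p n := by
  induction m with
  | zero => simp [listPow_zero]
  | succ m ih => rw [Nat.succ_add, listPow_succ, listPow_succ, ih, List.append_assoc]

lemma listPow_succ' (p : List α) (n : ℕ) : listPow p (n+1) = listPow p n ++ p := by
  rw [listPow_add, listPow_one]

lemma listPow_mul (p : List α) (m n : ℕ) :
    listPow p (m*n) = listPow (listPow p m) n := by
  induction n with
  | zero => simp [listPow_zero]
  | succ n ih => rw [Nat.mul_succ, listPow_add, listPow_succ', ih]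

lemma comm_pow : ∀ (n : ℕ) (u v : List α), u.length + v.length ≤ n →
    u ++ v = v ++ u → ∃ w k l, u = listPow w k ∧ v = listPow w l := by
  intro n
  induction n with
  | zero =>
    intro u v hl _
    have hu : u = [] := by
      have : u.length = 0 := by omega
      simpa [List.length_eq_zero_iff] using this
    have hv : v = [] := by
      have : v.length = 0 := by omega
      simpa [List.length_eq_zero_iff] using this
    exact ⟨[], 0, 0, by simp [hu, listPow_zero], by simp [hv, listPow_zero]⟩
  | succ n ih =>
    intro u v hl h
    rcases eq_or_ne u [] with rfl | hu
    · exact ⟨v, 0, 1, rfl, (listPow_one v).symm⟩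
    rcases eq_or_ne v [] with rfl | hv
    · exact ⟨u, 1, 0, (listPow_one u).symm, rfl⟩
    rcases List.append_eq_append_iff.mp h with ⟨w, hw1, hw2⟩ | ⟨w, hw1, hw2⟩
    · -- v = u ++ w, v = w ++ u
      have hcom : u ++ w = w ++ u := by rw [← hw1, hw2]
      have hlen : u.length + w.length ≤ n := by
        have h1 : 1 ≤ u.length := List.length_pos_iff.mpr hu
        have h2 : u.length + w.length = v.length := by rw [hw1]; simp
        omega
      obtain ⟨p, k, l, hk, hl'⟩ := ih u w hlen hcom
      exact ⟨p, k, k + l, hk, by rw [hw1, hk, hl', ← listPow_add]⟩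
    · -- u = v ++ w, u = w ++ v
      have hcom : v ++ w = w ++ v := by rw [← hw1, hw2]
      have hlen : v.length + w.length ≤ n := by
        have h1 : 1 ≤ v.length := List.length_pos_iff.mpr hv
        have h2 : v.length + w.length = u.length := by rw [hw1]; simp
        omega
      obtain ⟨p, k, l, hk, hl'⟩ := ih v w hlen hcom
      exact ⟨p, k + l, k, by rw [hw1, hk, hl', ← listPow_add], hk⟩

lemma conj_lemma : ∀ (n : ℕ) (y A B : List α), y.length ≤ n → A ≠ [] →
    A ++ y = y ++ B →
    ∃ u v k, A = u ++ v ∧ B = v ++ u ∧ y = listPow (u ++ v) k ++ u := by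
  intro n
  induction n with
  | zero =>
    intro y A B hl hA h
    have hy : y = [] := by
      have : y.length = 0 := by omega
      simpa [List.length_eq_zero_iff] using this
    subst hy
    refine ⟨[], A, 0, by simp, ?_, by simp [listPow_zero]⟩
    simpa using h.symm
  | succ n ih =>
    intro y A B hl hA h
    rcases List.append_eq_append_iff.mp h with ⟨w, hw1, hw2⟩ | ⟨w, hw1, hw2⟩
    · -- y = A ++ w, y = w ++ B
      have heq : A ++ w = w ++ B := by
      -- from A ++ (A ++ w) = (A ++ w) ++ B
        have h2 : A ++ (A ++ w) = (A ++ w) ++ B := by rw [← hw1]; exact h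
        rw [List.append_assoc] at h2
        exact List.append_cancel_left h2
      have hlen : w.length ≤ n := by
        have h1 : 1 ≤ A.length := List.length_pos_iff.mpr hA
        have h2 : y.length = A.length + w.length := by rw [hw1]; simp
        omega
      obtain ⟨u, v, k, h1, h2, h3⟩ := ih w A B hlen hA heq
      refine ⟨u, v, k + 1, h1, h2, ?_⟩
      rw [hw1, h3, h1, Nat.add_comm, listPow_add, listPow_one]
      simp [List.append_assoc]
    · -- A = y ++ w, B = w ++ y
      exact ⟨y, w, 0, hw1, hw2, by simp [listPow_zero]⟩

/-- Key structural step: from `x x = u v` and `v u ∈ {x θx, θx x}` deduce that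
`x` is a θ-palindrome and commutes with `u`. -/
lemma key_step (θ : List α → List α)
    (θlen : ∀ a : List α, (θ a).length = a.length)
    (x u v : List α) (h1 : x ++ x = u ++ v)
    (h2 : v ++ u = x ++ θ x ∨ v ++ u = θ x ++ x) :
    θ x = x ∧ x ++ u = u ++ x := by
  rcases List.append_eq_append_iff.mp h1.symm with ⟨w, hw1, hw2⟩ | ⟨w, hw1, hw2⟩
  · -- x = u ++ w, v = w ++ x
    have hvux : v ++ u = (w ++ u) ++ (w ++ u) := by
      rw [hw2, hw1]; simp [List.append_assoc]
    have hlen : (w ++ u).length = x.length := by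
      rw [hw1]; simp [Nat.add_comm]
    have hx1 : w ++ u = x ∧ w ++ u = θ x := by
      rcases h2 with h2 | h2
      · rw [hvux] at h2
        have := List.append_inj h2 hlen
        exact ⟨this.1, this.2⟩
      · rw [hvux] at h2
        have := List.append_inj h2 (by rw [hlen, θlen])
        exact ⟨this.2, this.1⟩
    obtain ⟨hx1, hx2⟩ := hx1
    refine ⟨by rw [← hx2, hx1], ?_⟩
    calc x ++ u = (u ++ w) ++ u := by rw [← hw1]
      _ = u ++ (w ++ u) := by simp [List.append_assoc]
      _ = u ++ x := by rw [hx1]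
  · -- u = x ++ w, x = w ++ v
    have hvux : v ++ u = (v ++ w) ++ (v ++ w) := by
      rw [hw1, hw2]; simp [List.append_assoc]
    have hlen : (v ++ w).length = x.length := by
      rw [hw2]; simp [Nat.add_comm]
    have hx1 : v ++ w = x ∧ v ++ w = θ x := by
      rcases h2 with h2 | h2
      · rw [hvux] at h2
        have := List.append_inj h2 hlen
        exact ⟨this.1, this.2⟩
      · rw [hvux] at h2
        have := List.append_inj h2 (by rw [hlen, θlen])
        exact ⟨this.2, this.1⟩
    obtain ⟨hx1, hx2⟩ := hx1
    refine ⟨by rw [← hx2, hx1], ?_⟩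
    have hwx : w ++ x = x ++ w :=
      calc w ++ x = w ++ (v ++ w) := by rw [← hx1]
        _ = (w ++ v) ++ w := by simp [List.append_assoc]
        _ = x ++ w := by rw [← hw2]
    calc x ++ u = x ++ (x ++ w) := by rw [hw1]
      _ = x ++ (w ++ x) := by rw [hwx]
      _ = (x ++ w) ++ x := by simp [List.append_assoc]
      _ = u ++ x := by rw [← hw1]

end Aux

/-- If `x x y = y x θ(x)` or `x x y = y θ(x) x` then `x` and `y` are powers of a
common θ-palindromic word. -/
theorem powers_of_common_palindrome_of_eq' {α : Type*} (t : α → α)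
    (ht : ∀ a, t (t a) = a) (θ : List α → List α)
    (hθ : ∀ u : List α, θ u = (u.map t).reverse)
    (x y : List α) (hx : x ≠ []) (hy : y ≠ [])
    (h : x ++ x ++ y = y ++ x ++ θ x ∨ x ++ x ++ y = y ++ θ x ++ x) :
    ∃ p : List α, θ p = p ∧
      ∃ i j : ℕ, 1 ≤ i ∧ 1 ≤ j ∧ x = listPow p i ∧ y = listPow p j := by
  have θapp : ∀ a b : List α, θ (a ++ b) = θ b ++ θ a := by
    intro a b; simp [hθ]
  have θlen : ∀ a : List α, (θ a).length = a.length := by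
    intro a; simp [hθ]
  have θpow : ∀ (p : List α) (n : ℕ), θ (listPow p n) = listPow (θ p) n := by
    intro p n
    induction n with
    | zero => simp [listPow_zero, hθ]
    | succ n ih => rw [listPow_succ, θapp, ih, listPow_succ']
  obtain ⟨B, hB, heq⟩ : ∃ B, (B = x ++ θ x ∨ B = θ x ++ x) ∧
      (x ++ x) ++ y = y ++ B := by
    rcases h with h | h
    · exact ⟨x ++ θ x, Or.inl rfl, by rw [h, List.append_assoc]⟩
    · exact ⟨θ x ++ x, Or.inr rfl, by rw [h, List.append_assoc]⟩
  obtain ⟨u, v, k, h1, h2, h3⟩ :=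
    conj_lemma y.length y (x ++ x) B le_rfl (by simp [hx]) heq
  have h2' : v ++ u = x ++ θ x ∨ v ++ u = θ x ++ x := by
    rcases hB with hB | hB
    · exact Or.inl (by rw [← h2, hB])
    · exact Or.inr (by rw [← h2, hB])
  obtain ⟨hpal, hcom⟩ := key_step θ θlen x u v h1 h2'
  obtain ⟨p, i0, j0, hxp, hup⟩ :=
    comm_pow (x.length + u.length) x u le_rfl hcom
  have hi0 : 1 ≤ i0 := by
    rcases Nat.eq_zero_or_pos i0 with rfl | hpos
    · exact absurd hxp hx
    · exact hpos
  have hθp : θ p = p := by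
    have hθx : θ (listPow p i0) = listPow p i0 := by rw [← hxp, hpal, hxp]
    rw [θpow] at hθx
    obtain ⟨i1, rfl⟩ : ∃ i1, i0 = i1 + 1 := ⟨i0 - 1, by omega⟩
    rw [listPow_succ, listPow_succ] at hθx
    exact (List.append_inj hθx (θlen p)).1
  have hy2 : y = listPow p ((i0 + i0) * k + j0) := by
    rw [h3, h1.symm, hxp, hup, ← listPow_add, ← listPow_mul, ← listPow_add]
  refine ⟨p, hθp, i0, (i0 + i0) * k + j0, hi0, ?_, hxp, hy2⟩
  rcases Nat.eq_zero_or_pos ((i0 + i0) * k + j0) with hz | hpos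
  · exact absurd (by rw [hy2, hz, listPow_zero]) hy
  · exact hpos
end

section
/- Let θ be the antimorphic involution induced by an involutive letter map t : Σ → Σ, let x, y ∈ Σ+, and let i ≥ 1. If x(xy)ⁱ = (yx)ⁱθ(x) or x(xy)ⁱ = (yθ(x))ⁱx, then x and y are powers of a common θ-palindromic word, i.e., there exist p ∈ P_θ and integers m, n ≥ 1 with x = pᵐ and y = pⁿ. -/
namespace ListPowAux

variable {α : Type*}

theorem lpZero (p : List α) : listPow p 0 = [] := rfl
theorem lpSucc (p : List α) (n : ℕ) : listPow p (n+1) = p ++ listPow p n := by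
  simp [listPow, List.replicate_succ]
theorem lpOne (p : List α) : listPow p 1 = p := by simp [lpSucc, lpZero]
theorem lpAdd (p : List α) (m n : ℕ) : listPow p (m+n) = listPow p m ++ listPow p n := by
  induction m with
  | zero => simp [lpZero]
  | succ m ih => rw [Nat.succ_add, lpSucc, lpSucc, ih, List.append_assoc]
theorem lpSucc' (p : List α) (n : ℕ) : listPow p (n+1) = listPow p n ++ p := by
  rw [lpAdd, lpOne]
theorem lpLen (p : List α) (n : ℕ) : (listPow p n).length = n * p.length := by
  induction n with
  | zero => simp [lpZero]
  | succ n ih => rw [lpSucc]; simp [ih, Nat.succ_mul]; omega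
theorem lpNeNil {p : List α} (hp : p ≠ []) {n : ℕ} (hn : 1 ≤ n) : listPow p n ≠ [] := by
  cases n with
  | zero => omega
  | succ n => rw [lpSucc]; simp [hp]
theorem lpExpPos {x z : List α} {n : ℕ} (h : x = listPow z n) (hx : x ≠ []) : 1 ≤ n := by
  cases n with
  | zero => exact absurd h hx
  | succ n => omega
theorem lpPowPow (z : List α) (k n : ℕ) : listPow (listPow z k) n = listPow z (n*k) := by
  induction n with
  | zero => simp [lpZero]
  | succ n ih => rw [lpSucc, ih, Nat.succ_mul, Nat.add_comm, lpAdd]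
theorem lpBase {u v : List α} {n : ℕ} (h : listPow u n = listPow v n)
    (hlen : u.length = v.length) (hn : 1 ≤ n) : u = v := by
  obtain ⟨m, rfl⟩ : ∃ m, n = m + 1 := ⟨n - 1, by omega⟩
  rw [lpSucc, lpSucc] at h
  exact (List.append_inj h hlen).1
theorem lpShift (n : ℕ) (u w : List α) :
    u ++ listPow (w ++ u) n = listPow (u ++ w) n ++ u := by
  induction n with
  | zero => simp [lpZero]
  | succ n ih =>
    rw [lpSucc, lpSucc, ← List.append_assoc, List.append_assoc (u++w), ← ih]
    simp [List.append_assoc]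

theorem lpConj : ∀ (n : ℕ) (u z v : List α), z.length ≤ n → u ++ z = z ++ v → u ≠ [] →
    ∃ p q k, u = p ++ q ∧ v = q ++ p ∧ z = listPow (p ++ q) k ++ p := by
  intro n
  induction n with
  | zero =>
    intro u z v hn h hu
    have hz : z = [] := List.length_eq_zero_iff.mp (Nat.le_zero.mp hn)
    subst hz
    refine ⟨[], u, 0, by simp, ?_, by simp [lpZero]⟩
    simpa using h.symm
  | succ n ih =>
    intro u z v hn h hu
    rcases le_or_gt z.length u.length with hle | hlt
    · have hzu : z <+: u :=
        List.prefix_of_prefix_length_le ⟨v, h.symm⟩ (List.prefix_append u z) hle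
      obtain ⟨q, hq⟩ := hzu
      have hv : v = q ++ z := by
        have : z ++ (q ++ z) = z ++ v := by
          rw [← List.append_assoc, hq]; exact h
        exact (List.append_cancel_left this).symm
      exact ⟨z, q, 0, hq.symm, hv, by simp [lpZero]⟩
    · have huz : u <+: z :=
        List.prefix_of_prefix_length_le (List.prefix_append u z) ⟨v, h.symm⟩ hlt.le
      obtain ⟨z', hz'⟩ := huz
      have hupos : 0 < u.length := List.length_pos_iff.mpr hu
      have h2 : u ++ z' = z' ++ v := by
        have : u ++ (u ++ z') = u ++ (z' ++ v) := by
          rw [hz', h, ← hz', List.append_assoc]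
        exact List.append_cancel_left this
      have hfuel : z'.length ≤ n := by
        have := congrArg List.length hz'
        simp [List.length_append] at this
        omega
      obtain ⟨p, q, k, hpq, hqp, hzz⟩ := ih u z' v hfuel h2 hu
      refine ⟨p, q, k + 1, hpq, hqp, ?_⟩
      rw [← hz', hzz, lpSucc, hpq]
      simp [List.append_assoc]

theorem lpCommRoot : ∀ (n : ℕ) (u v : List α), (u ++ v).length ≤ n → u ++ v = v ++ u →
    u ++ v ≠ [] → ∃ z k l, z ≠ [] ∧ u = listPow z k ∧ v = listPow z l := by
  intro n
  induction n with
  | zero =>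
    intro u v hn h hne
    exact absurd (List.length_eq_zero_iff.mp (Nat.le_zero.mp hn)) hne
  | succ n ih =>
    intro u v hn h hne
    by_cases hu : u = []
    · subst hu
      have hv : v ≠ [] := by simpa using hne
      exact ⟨v, 0, 1, hv, rfl, by simp [lpSucc, lpZero]⟩
    by_cases hv : v = []
    · subst hv
      exact ⟨u, 1, 0, hu, by simp [lpSucc, lpZero], rfl⟩
    rcases le_total u.length v.length with hle | hle
    · have huv : u <+: v :=
        List.prefix_of_prefix_length_le (List.prefix_append u v) ⟨u, h.symm⟩ hle
      obtain ⟨w, hw⟩ := huv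
      have hcomm : u ++ w = w ++ u := by
        have : u ++ (u ++ w) = u ++ (w ++ u) := by
          rw [hw, h, ← hw, List.append_assoc]
        exact List.append_cancel_left this
      have hupos : 0 < u.length := List.length_pos_iff.mpr hu
      have hfuel : (u ++ w).length ≤ n := by
        have h1 := congrArg List.length hw
        simp [List.length_append] at h1 ⊢
        simp [List.length_append] at hn
        omega
      obtain ⟨z, k, l, hz, hzu, hzw⟩ := ih u w hfuel hcomm (by simp [hu])
      exact ⟨z, k, k + l, hz, hzu, by rw [← hw, hzu, hzw, lpAdd]⟩
    · have hvu : v <+: u :=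
        List.prefix_of_prefix_length_le (List.prefix_append v u) ⟨v, h⟩ hle
      obtain ⟨w, hw⟩ := hvu
      have hcomm : v ++ w = w ++ v := by
        have : v ++ (v ++ w) = v ++ (w ++ v) := by
          rw [hw, h.symm, ← hw, List.append_assoc]
        exact List.append_cancel_left this
      have hvpos : 0 < v.length := List.length_pos_iff.mpr hv
      have hfuel : (v ++ w).length ≤ n := by
        have h1 := congrArg List.length hw
        simp [List.length_append] at h1 ⊢
        simp [List.length_append] at hn
        omega
      obtain ⟨z, k, l, hz, hzv, hzw⟩ := ih v w hfuel hcomm (by simp [hv])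
      exact ⟨z, k + l, k, hz, by rw [← hw, hzv, hzw, lpAdd], hzv⟩


theorem lpPowEqCore {u v : List α} {m n : ℕ} (h : listPow u m = listPow v n)
    (hu : u ≠ []) (hm : 1 ≤ m) (hn : 1 ≤ n) (hlen : u.length ≤ v.length) :
    ∃ z k l, z ≠ [] ∧ u = listPow z k ∧ v = listPow z l := by
  have hum : u <+: listPow u m := by
    obtain ⟨m', rfl⟩ : ∃ m', m = m' + 1 := ⟨m - 1, by omega⟩
    rw [lpSucc]; exact List.prefix_append u _
  have hvn : v <+: listPow u m := by
    rw [h]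
    obtain ⟨n', rfl⟩ : ∃ n', n = n' + 1 := ⟨n - 1, by omega⟩
    rw [lpSucc]; exact List.prefix_append v _
  have huv : u <+: v := List.prefix_of_prefix_length_le hum hvn hlen
  obtain ⟨w, hw⟩ := huv
  -- listPow u m = listPow (u ++ w) n  and  listPow u m = listPow (w ++ u) n
  have h1 : listPow u m = listPow (u ++ w) n := by rw [hw]; exact h
  have h2 : u ++ listPow u m = u ++ listPow (w ++ u) n := by
    have hs1 : listPow u m ++ u = u ++ listPow u m := by
      have := lpShift m u []
      simpa using this.symm
    have hs2 : listPow (u ++ w) n ++ u = u ++ listPow (w ++ u) n := (lpShift n u w).symm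
    rw [← hs1, ← hs2, h1]
  have h3 : listPow u m = listPow (w ++ u) n := List.append_cancel_left h2
  have hbase : u ++ w = w ++ u := by
    apply lpBase (h1.symm.trans h3)
    · simp [List.length_append]; omega
    · exact hn
  obtain ⟨z, k, l, hz, hzu, hzw⟩ :=
    lpCommRoot (u ++ w).length u w le_rfl hbase (by simp [hu])
  exact ⟨z, k, k + l, hz, hzu, by rw [← hw, hzu, hzw, lpAdd]⟩

theorem lpPowEq {u v : List α} {m n : ℕ} (h : listPow u m = listPow v n)
    (hu : u ≠ []) (hv : v ≠ []) (hm : 1 ≤ m) (hn : 1 ≤ n) :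
    ∃ z k l, z ≠ [] ∧ u = listPow z k ∧ v = listPow z l := by
  rcases le_total u.length v.length with hle | hle
  · exact lpPowEqCore h hu hm hn hle
  · obtain ⟨z, k, l, hz, hzv, hzu⟩ := lpPowEqCore h.symm hv hn hm hle
    exact ⟨z, l, k, hz, hzu, hzv⟩

/-- Key palindromic-structure lemma: if `x++x = p++q` and `X++x = q++p` with
`|X| = |x|`, then `X = x` and `x`, `p` are powers of a common word. -/
theorem lpPal {X x p q : List α} (hlen : X.length = x.length) (hx : x ≠ [])
    (h1 : x ++ x = p ++ q) (h2 : X ++ x = q ++ p) :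
    X = x ∧ ∃ z n₁ n₂, z ≠ [] ∧ 1 ≤ n₁ ∧ x = listPow z n₁ ∧ p = listPow z n₂ := by
  rcases le_total p.length x.length with hp | hp
  · -- p is a prefix of x
    have hpx : p <+: x :=
      List.prefix_of_prefix_length_le ⟨q, h1.symm⟩ (List.prefix_append x x) hp
    obtain ⟨s, hs⟩ := hpx
    have hq : q = s ++ (p ++ s) := by
      have hpp : p ++ (s ++ (p ++ s)) = p ++ q := by
        rw [← List.append_assoc, hs]; exact h1
      exact (List.append_cancel_left hpp).symm
    have h2' : X ++ x = (s ++ p) ++ (s ++ p) := by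
      rw [h2, hq]; simp [List.append_assoc]
    have hXsp : X = s ++ p ∧ x = s ++ p := by
      apply List.append_inj h2'
      rw [hlen, ← hs]; simp [List.length_append]; omega
    have hxsp : x = s ++ p := hXsp.2
    have hXx : X = x := hXsp.1.trans hxsp.symm
    have hcomm : p ++ s = s ++ p := by rw [hs, ← hxsp]
    obtain ⟨z, k, l, hz, hzp, hzs⟩ :=
      lpCommRoot (p ++ s).length p s le_rfl hcomm (by rw [hs]; exact hx)
    have hxz : x = listPow z (k + l) := by rw [← hs, hzp, hzs, lpAdd]
    exact ⟨hXx, z, k + l, k, hz, lpExpPos hxz hx, hxz, hzp⟩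
  · -- x is a prefix of p
    have hxp : x <+: p :=
      List.prefix_of_prefix_length_le (List.prefix_append x x) ⟨q, h1.symm⟩ hp
    obtain ⟨r, hr⟩ := hxp
    have hxrq : x = r ++ q := by
      have : x ++ x = x ++ (r ++ q) := by
        rw [← List.append_assoc, hr]; exact h1
      exact List.append_cancel_left this
    have h2' : X ++ x = (q ++ r) ++ (q ++ r) := by
      rw [h2, ← hr, hxrq]; simp [List.append_assoc]
    have hXqr : X = q ++ r ∧ x = q ++ r := by
      apply List.append_inj h2'
      have e1 := congrArg List.length hxrq
      simp [List.length_append] at e1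
      simp [List.length_append, hlen, e1]; omega
    have hxqr : x = q ++ r := hXqr.2
    have hXx : X = x := hXqr.1.trans hxqr.symm
    have hcomm : q ++ r = r ++ q := by rw [← hxqr, hxrq]
    obtain ⟨z, k, l, hz, hzq, hzr⟩ :=
      lpCommRoot (q ++ r).length q r le_rfl hcomm (by rw [← hxqr]; exact hx)
    have hxz : x = listPow z (k + l) := by rw [hxqr, hzq, hzr, lpAdd]
    have hpz : p = listPow z (k + l + l) := by
      rw [← hr, hxz, hzr, ← lpAdd]
    exact ⟨hXx, z, k + l, k + l + l, hz, lpExpPos hxz hx, hxz, hpz⟩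


end ListPowAux

open ListPowAux in
/-- If `x(xy)ⁱ = (yx)ⁱθ(x)` or `x(xy)ⁱ = (yθ(x))ⁱx` for some `i ≥ 1`, then `x`
and `y` are powers of a common θ-palindromic word. -/
theorem powers_of_common_palindrome_of_eq_pow {α : Type*} (t : α → α)
    (ht : ∀ a, t (t a) = a) (θ : List α → List α)
    (hθ : ∀ u : List α, θ u = (u.map t).reverse)
    (x y : List α) (hx : x ≠ []) (hy : y ≠ []) (i : ℕ) (hi : 1 ≤ i)
    (h : x ++ listPow (x ++ y) i = listPow (y ++ x) i ++ θ x ∨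
         x ++ listPow (x ++ y) i = listPow (y ++ θ x) i ++ x) :
    ∃ p : List α, θ p = p ∧
      ∃ m n : ℕ, 1 ≤ m ∧ 1 ≤ n ∧ x = listPow p m ∧ y = listPow p n := by
  have hθlen : ∀ u : List α, (θ u).length = u.length := by intro u; simp [hθ]
  have hθapp : ∀ u v : List α, θ (u ++ v) = θ v ++ θ u := by intro u v; simp [hθ]
  have hθpow : ∀ (z : List α) (c : ℕ), θ (listPow z c) = listPow (θ z) c := by
    intro z c
    induction c with
    | zero => simp [lpZero, hθ]
    | succ c ih => rw [lpSucc, hθapp, ih, lpSucc']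
  have hθbase : ∀ (w : List α) (c : ℕ), 1 ≤ c → θ (listPow w c) = listPow w c → θ w = w := by
    intro w c hc hlpPal
    rw [hθpow] at hlpPal
    exact lpBase hlpPal (hθlen w) hc
  rcases h with h1 | h2
  · -- CASE 1 : x (xy)^i = (yx)^i θ(x)
    have hlpShift : listPow (x ++ y) i ++ x = x ++ listPow (y ++ x) i := (lpShift i x y).symm
    have key : (x ++ x) ++ listPow (y ++ x) i = listPow (y ++ x) i ++ (θ x ++ x) := by
      calc (x ++ x) ++ listPow (y ++ x) i
          = x ++ (x ++ listPow (y ++ x) i) := by simp [List.append_assoc]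
        _ = x ++ (listPow (x ++ y) i ++ x) := by rw [hlpShift]
        _ = (x ++ listPow (x ++ y) i) ++ x := by simp [List.append_assoc]
        _ = (listPow (y ++ x) i ++ θ x) ++ x := by rw [h1]
        _ = listPow (y ++ x) i ++ (θ x ++ x) := by simp [List.append_assoc]
    have hZ : listPow (y ++ x) i ≠ [] := lpNeNil (by simp [hy]) hi
    obtain ⟨p, q, k, hpq, hqp, hz⟩ :=
      lpConj (listPow (y ++ x) i).length (x ++ x) (listPow (y ++ x) i) (θ x ++ x)
        le_rfl key (by simp [hx])
    obtain ⟨hXx, z, n₁, n₂, hzne, hn₁, hxz, hpz⟩ := lpPal (hθlen x) hx hpq hqp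
    have hpqz : p ++ q = listPow z (n₁ + n₁) := by rw [← hpq, hxz, lpAdd]
    have hN : listPow (y ++ x) i = listPow z (k * (n₁ + n₁) + n₂) := by
      rw [hz, hpqz, lpPowPow, hpz, ← lpAdd]
    have hNpos : 1 ≤ k * (n₁ + n₁) + n₂ := lpExpPos hN hZ
    obtain ⟨w, k₂, l₂, hw, hyxw, hzw⟩ := lpPowEq hN (by simp [hy]) hzne hi hNpos
    have hxw : x = listPow w (n₁ * l₂) := by rw [hxz, hzw, lpPowPow]
    have hm' : 1 ≤ n₁ * l₂ := lpExpPos hxw hx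
    have hlw : 0 < w.length := List.length_pos_iff.mpr hw
    have hlen1 : y.length + x.length = k₂ * w.length := by
      have := congrArg List.length hyxw; simpa [lpLen] using this
    have hlen2 : x.length = (n₁ * l₂) * w.length := by
      have := congrArg List.length hxw; simpa [lpLen] using this
    have hypos : 0 < y.length := List.length_pos_iff.mpr hy
    have hk₂ : n₁ * l₂ < k₂ := by
      by_contra hcon
      push_neg at hcon
      have : k₂ * w.length ≤ (n₁ * l₂) * w.length := Nat.mul_le_mul_right _ hcon
      omega
    have hysplit : y ++ x = listPow w (k₂ - n₁ * l₂) ++ listPow w (n₁ * l₂) := by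
      rw [← lpAdd, Nat.sub_add_cancel hk₂.le]; exact hyxw
    have hyw : y = listPow w (k₂ - n₁ * l₂) := by
      have hl : x.length = (listPow w (n₁ * l₂)).length := by rw [← hxw]
      exact (List.append_inj' hysplit (by rw [← hxw])).1
    have hθw : θ w = w := by
      apply hθbase w (n₁ * l₂) hm'
      rw [← hxw]; exact hXx
    exact ⟨w, hθw, n₁ * l₂, k₂ - n₁ * l₂, hm', by omega, hxw, hyw⟩
  · -- CASE 2 : x (xy)^i = (y θ(x))^i x
    obtain ⟨i', rfl⟩ : ∃ i', i = i' + 1 := ⟨i - 1, by omega⟩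
    rcases le_or_gt x.length y.length with hab | hba
    · -- |x| ≤ |y| : y = x ++ Y1
      have hpow2 : listPow (y ++ θ x) (i' + 1) ++ x
          = y ++ (θ x ++ (listPow (y ++ θ x) i' ++ x)) := by
        rw [lpSucc]; simp [List.append_assoc]
      have hxpre : x <+: x ++ listPow (x ++ y) (i' + 1) := List.prefix_append _ _
      have hypre : y <+: x ++ listPow (x ++ y) (i' + 1) := by
        rw [h2, hpow2]; exact List.prefix_append _ _
      obtain ⟨Y1, hY1⟩ := List.prefix_of_prefix_length_le hxpre hypre hab
      have hY1 : y = x ++ Y1 := hY1.symm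
      have hlpShift2 : x ++ listPow ((Y1 ++ θ x) ++ x) (i' + 1)
          = listPow (x ++ (Y1 ++ θ x)) (i' + 1) ++ x := lpShift (i' + 1) x (Y1 ++ θ x)
      have hcancel : listPow (x ++ (x ++ Y1)) (i' + 1)
          = listPow ((Y1 ++ θ x) ++ x) (i' + 1) := by
        apply List.append_cancel_left (as := x)
        calc x ++ listPow (x ++ (x ++ Y1)) (i' + 1)
            = x ++ listPow (x ++ y) (i' + 1) := by rw [hY1]
          _ = listPow (y ++ θ x) (i' + 1) ++ x := h2
          _ = listPow (x ++ (Y1 ++ θ x)) (i' + 1) ++ x := by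
                rw [hY1]; simp [List.append_assoc]
          _ = x ++ listPow ((Y1 ++ θ x) ++ x) (i' + 1) := hlpShift2.symm
      have hY1len : Y1.length = y.length - x.length := by
        have := congrArg List.length hY1; simp [List.length_append] at this; omega
      have hblock : x ++ (x ++ Y1) = (Y1 ++ θ x) ++ x := by
        apply lpBase hcancel _ (by omega)
        simp [List.length_append, hθlen]; omega
      have hlpConjeq : (x ++ x) ++ Y1 = Y1 ++ (θ x ++ x) := by
        simpa [List.append_assoc] using hblock
      obtain ⟨p, q, k, hpq, hqp, hzY⟩ :=
        lpConj Y1.length (x ++ x) Y1 (θ x ++ x) le_rfl hlpConjeq (by simp [hx])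
      obtain ⟨hXx, z, n₁, n₂, hzne, hn₁, hxz, hpz⟩ := lpPal (hθlen x) hx hpq hqp
      have hpqz : p ++ q = listPow z (n₁ + n₁) := by rw [← hpq, hxz, lpAdd]
      have hY1z : Y1 = listPow z (k * (n₁ + n₁) + n₂) := by
        rw [hzY, hpqz, lpPowPow, hpz, ← lpAdd]
      have hyz : y = listPow z (n₁ + (k * (n₁ + n₁) + n₂)) := by
        rw [hY1, hxz, hY1z, ← lpAdd]
      have hθz : θ z = z := by
        apply hθbase z n₁ hn₁
        rw [← hxz]; exact hXx
      exact ⟨z, hθz, n₁, n₁ + (k * (n₁ + n₁) + n₂), hn₁, by omega, hxz, hyz⟩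
    · -- |y| < |x| : x = y ++ X1 and x = X1 ++ y
      have hpow2 : listPow (y ++ θ x) (i' + 1) ++ x
          = y ++ (θ x ++ (listPow (y ++ θ x) i' ++ x)) := by
        rw [lpSucc]; simp [List.append_assoc]
      have hxpre : x <+: x ++ listPow (x ++ y) (i' + 1) := List.prefix_append _ _
      have hypre : y <+: x ++ listPow (x ++ y) (i' + 1) := by
        rw [h2, hpow2]; exact List.prefix_append _ _
      obtain ⟨X1, hX1'⟩ := List.prefix_of_prefix_length_le hypre hxpre hba.le
      have hX1 : x = y ++ X1 := hX1'.symm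
      have hxyy : x ++ y = y ++ (X1 ++ y) := by
        conv_lhs => rw [hX1]
        simp [List.append_assoc]
      have hgen : ∀ P : List α, x ++ (P ++ (x ++ y)) = (x ++ (P ++ y)) ++ (X1 ++ y) := by
        intro P
        rw [hxyy]
        simp [List.append_assoc]
      have hLHS : x ++ listPow (x ++ y) (i' + 1)
          = (x ++ (listPow (x ++ y) i' ++ y)) ++ (X1 ++ y) := by
        rw [lpSucc']; exact hgen _
      have hX1len : X1.length = x.length - y.length := by
        have := congrArg List.length hX1; simp [List.length_append] at this; omega
      have hsuf : X1 ++ y = x := by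
        have hEq2 : (x ++ (listPow (x ++ y) i' ++ y)) ++ (X1 ++ y)
            = listPow (y ++ θ x) (i' + 1) ++ x := hLHS.symm.trans h2
        exact (List.append_inj' hEq2 (by simp [List.length_append]; omega)).2
      have hcomm : X1 ++ y = y ++ X1 := by rw [hsuf]; exact hX1
      obtain ⟨z, k, l, hzne, hX1z, hyz⟩ :=
        lpCommRoot (X1 ++ y).length X1 y le_rfl hcomm (by rw [hsuf]; exact hx)
      have hl : 1 ≤ l := lpExpPos hyz hy
      have hxz : x = listPow z (k + l) := by rw [← hsuf, hX1z, hyz, lpAdd]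
      have hc : 1 ≤ k + l := by omega
      -- derive θ z = z
      have hxyz : x ++ y = listPow z ((k + l) + l) := by rw [hxz, hyz, ← lpAdd]
      have hM : l ≤ (i' + 1) * ((k + l) + l) :=
        le_trans (by omega) (Nat.le_mul_of_pos_left _ (by omega))
      obtain ⟨R, hR⟩ : ∃ R, (i' + 1) * ((k + l) + l) = l + R :=
        ⟨(i' + 1) * ((k + l) + l) - l, (Nat.add_sub_cancel' hM).symm⟩
      have e1 : x ++ listPow (x ++ y) (i' + 1)
          = (listPow z l ++ listPow z (k + l)) ++ listPow z R := by
        rw [hxyz, hxz, lpPowPow, hR, ← lpAdd, ← lpAdd, ← lpAdd]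
        congr 1
        omega
      have e2 : x ++ listPow (x ++ y) (i' + 1)
          = (listPow z l ++ listPow (θ z) (k + l)) ++ (listPow (y ++ θ x) i' ++ x) := by
        rw [h2, hpow2, hyz, hxz, hθpow]
        simp [List.append_assoc]
      have e3 : listPow z l ++ listPow z (k + l)
          = listPow z l ++ listPow (θ z) (k + l) := by
        have := e1.symm.trans e2
        exact (List.append_inj this (by simp [List.length_append, lpLen, hθlen])).1
      have hθz : θ z = z := by
        have h4 : listPow z (k + l) = listPow (θ z) (k + l) := List.append_cancel_left e3
        exact (lpBase h4.symm (hθlen z) hc)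
      exact ⟨z, hθz, k + l, l, hc, hl, hxz, hyz⟩
end
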